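/- For the Cayley 4-form Φ on ℝ^8, any 1-form η, and the 3-form γ = ⋆(Φ ∧ η), the pointwise norm satisfies |γ|² = 7|η|²; equivalently, (Φ ∧ η) ∧ ⋆(Φ ∧ η) = 7 η ∧ ⋆η. -/

import Mathlib

open Finset

noncomputable section

/-- The exterior algebra of (ℝ^8)*, modeled as coefficient functions on basis index sets. -/
abbrev Form := Finset (Fin 8) → ℝ

/-- Sign `(-1)^{#{(i,j) ∈ t × u : j < i}}` arising when merging two wedge monomials. -/
def esign (t u : Finset (Fin 8)) : ℝ :=
  (-1 : ℝ) ^ ((t ×ˢ u).filter (fun p => p.2 < p.1)).card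

/-- Wedge product of forms. -/
def wedge (α β : Form) : Form := fun s =>
  ∑ t ∈ s.powerset, esign t (s \ t) * α t * β (s \ t)

/-- Hodge star for the standard Euclidean metric and orientation `e^{01234567}`,
characterized by `α ∧ ⋆β = ⟨α,β⟩ vol`. -/
def hodge (α : Form) : Form := fun u => esign uᶜ u * α uᶜ

/-- Inner product on forms, making the basis monomials orthonormal. -/
def formInner (α β : Form) : ℝ := ∑ s : Finset (Fin 8), α s * β s

/-- Basis monomial `e^{i₁} ∧ ⋯ ∧ e^{i_k}` for `s = {i₁ < ⋯ < i_k}`. -/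
def eS (s : Finset (Fin 8)) : Form := fun t => if t = s then 1 else 0

/-- `α` is a `k`-form. -/
def IsForm (k : ℕ) (α : Form) : Prop := ∀ s, s.card ≠ k → α s = 0

/-- The standard Cayley (Spin(7)) 4-form on ℝ^8. -/
def Phi : Form :=
  eS {0,1,2,3} - eS {0,1,4,5} - eS {0,1,6,7} - eS {0,2,4,6} + eS {0,2,5,7}
  - eS {0,3,4,7} - eS {0,3,5,6} + eS {4,5,6,7} - eS {2,3,6,7} - eS {2,3,4,5}
  - eS {1,3,5,7} + eS {1,3,4,6} - eS {1,2,5,6} - eS {1,2,4,7}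

/-- Interior product with the basis vector `e_i`. -/
def iota (i : Fin 8) (α : Form) : Form := fun s =>
  if i ∈ s then 0 else (-1 : ℝ) ^ (s.filter (· < i)).card * α (insert i s)

/-- Interior product with the vector `v`. -/
def iotaV (v : Fin 8 → ℝ) (α : Form) : Form := fun s => ∑ i, v i * iota i α s

/-- Musical isomorphism `♭ : ℝ^8 → Λ¹(ℝ^8)*`. -/
def flat (v : Fin 8 → ℝ) : Form := fun s => ∑ i, v i * eS {i} s

/-- Projection onto `Λ²_7` (eigenvalue 3 of `ω ↦ ⋆(Φ ∧ ω)`). -/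
def proj7 (α : Form) : Form := (4 : ℝ)⁻¹ • (α + hodge (wedge Phi α))

/-- Projection onto `Λ²_21` (eigenvalue -1 of `ω ↦ ⋆(Φ ∧ ω)`). -/
def proj21 (α : Form) : Form := (4 : ℝ)⁻¹ • ((3 : ℝ) • α - hodge (wedge Phi α))

/-- Evaluation of a 4-form on four vectors. -/
def ev4 (α : Form) (x y z w : Fin 8 → ℝ) : ℝ :=
  iotaV w (iotaV z (iotaV y (iotaV x α))) ∅

/-- Standard inner product on ℝ^8. -/
def dot (u v : Fin 8 → ℝ) : ℝ := ∑ i, u i * v i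

/-- Standard basis vector. -/
def std (i : Fin 8) : Fin 8 → ℝ := fun j => if j = i then 1 else 0

end

/-! The Cayley form is a signed sum `Φ = ∑ ± e^{S_k}` of 14 monomials in which any two index
sets `S_k` share at most two indices. For a 1-form `η` the forms `e^{S_k} ∧ η` are therefore
mutually orthogonal, and `|e^S ∧ η|² = ∑_{i ∉ S} η_i²`; since every index lies outside exactly 7
of the `S_k`, `|Φ ∧ η|² = 7 |η|²`. Both identities follow, as `⋆` is an isometry and `α ∧ ⋆β = ⟨α, β⟩ vol` for
forms of equal degree. -/

lemma sum_powerset_eq_sum_singleton {α M : Type*} [DecidableEq α] [AddCommMonoid M]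
    (A : Finset α) {g : Finset α → M} (hg : ∀ u, u.card ≠ 1 → g u = 0) :
    ∑ u ∈ A.powerset, g u = ∑ i ∈ A, g {i} := by
  have hsub : A.powersetCard 1 ⊆ A.powerset := fun u hu => mem_powerset.2 (mem_powersetCard.1 hu).1
  rw [← sum_subset hsub fun u hu hu1 =>
    hg u fun h => hu1 (mem_powersetCard.2 ⟨mem_powerset.1 hu, h⟩), powersetCard_one, sum_map]
  rfl

lemma esign_mul_self (t u : Finset (Fin 8)) : esign t u * esign t u = 1 := by
  rw [esign, ← pow_add]
  exact Even.neg_one_pow ⟨_, rfl⟩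

lemma formInner_hodge_hodge (α β : Form) : formInner (hodge α) (hodge β) = formInner α β := by
  unfold formInner hodge
  refine Fintype.sum_equiv (compl_involutive.toPerm _) _ _ fun u => ?_
  change _ = α uᶜ * β uᶜ
  linear_combination (α uᶜ * β uᶜ) * esign_mul_self uᶜ u

lemma wedge_hodge_apply_univ (α β : Form) : wedge α (hodge β) univ = formInner α β := by
  simp only [wedge, hodge, formInner, powerset_univ, ← compl_eq_univ_sdiff, compl_compl]
  refine sum_congr rfl fun t _ => ?_
  linear_combination (α t * β t) * esign_mul_self t tᶜ

lemma wedge_hodge_apply_of_ne_univ {k : ℕ} {α β : Form} (hα : IsForm k α) (hβ : IsForm k β)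
    {s : Finset (Fin 8)} (hs : s ≠ univ) : wedge α (hodge β) s = 0 := by
  refine sum_eq_zero fun t ht => ?_
  rw [mem_powerset] at ht
  by_cases htk : t.card = k
  · have : (s \ t)ᶜ.card ≠ k := by
      have hs8 : s.card < 8 := by simpa using (card_lt_iff_ne_univ s).2 hs
      have hts := card_le_card ht
      rw [card_compl, card_sdiff_of_subset ht, Fintype.card_fin]
      omega
    simp [hodge, hβ _ this]
  · simp [hα _ htk]

lemma wedge_hodge {k : ℕ} {α β : Form} (hα : IsForm k α) (hβ : IsForm k β) :
    wedge α (hodge β) = formInner α β • eS univ := by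
  funext s
  by_cases hs : s = univ
  · simp [hs, wedge_hodge_apply_univ, eS]
  · simp [wedge_hodge_apply_of_ne_univ hα hβ hs, eS, hs]

lemma IsForm.wedge {k l : ℕ} {α β : Form} (hα : IsForm k α) (hβ : IsForm l β) :
    IsForm (k + l) (wedge α β) := by
  intro s hs
  refine sum_eq_zero fun t ht => ?_
  by_cases htk : t.card = k
  · have : (s \ t).card ≠ l := by
      have := card_sdiff_add_card_eq_card (mem_powerset.1 ht)
      omega
    simp [hβ _ this]
  · simp [hα _ htk]

lemma isForm_sum_smul_eS {ι : Type*} [Fintype ι] {p : ℕ} (S : ι → Finset (Fin 8)) (c : ι → ℝ)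
    (hS : ∀ k, (S k).card = p) : IsForm p (∑ k, c k • eS (S k)) := by
  intro s hs
  simp only [Finset.sum_apply, Pi.smul_apply, smul_eq_mul]
  refine sum_eq_zero fun k _ => ?_
  have : s ≠ S k := fun h => hs (h ▸ hS k)
  simp [eS, this]

lemma wedge_sum_smul_left {ι : Type*} (K : Finset ι) (c : ι → ℝ) (α : ι → Form) (β : Form) :
    wedge (∑ k ∈ K, c k • α k) β = ∑ k ∈ K, c k • wedge (α k) β := by
  funext s
  simp only [wedge, Finset.sum_apply, Pi.smul_apply, smul_eq_mul, sum_mul, mul_sum]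
  rw [sum_comm]
  exact sum_congr rfl fun _ _ => sum_congr rfl fun _ _ => by ring

lemma formInner_eq_dotProduct (α β : Form) : formInner α β = α ⬝ᵥ β := rfl

lemma formInner_sum_smul_self_of_pairwise {ι : Type*} [Fintype ι] (c : ι → ℝ) (α : ι → Form)
    (h : Pairwise fun k l => formInner (α k) (α l) = 0) :
    formInner (∑ k, c k • α k) (∑ k, c k • α k) = ∑ k, c k ^ 2 * formInner (α k) (α k) := by
  simp only [formInner_eq_dotProduct, sum_dotProduct, dotProduct_sum, smul_dotProduct,
    dotProduct_smul, smul_eq_mul]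
  refine sum_congr rfl fun k _ => ?_
  rw [sum_eq_single k (fun l _ hlk => by rw [← formInner_eq_dotProduct, h hlk]; ring)
    (fun hk => absurd (mem_univ k) hk)]
  ring

lemma wedge_eS_apply (T : Finset (Fin 8)) (β : Form) (s : Finset (Fin 8)) :
    wedge (eS T) β s = if T ⊆ s then esign T (s \ T) * β (s \ T) else 0 := by
  simp only [wedge, eS, mul_ite, mul_one, mul_zero, ite_mul, zero_mul]
  rw [sum_ite_eq' s.powerset T (fun t => esign t (s \ t) * β (s \ t))]
  simp [mem_powerset]

lemma formInner_wedge_eS_self (T : Finset (Fin 8)) (η : Form) :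
    formInner (wedge (eS T) η) (wedge (eS T) η) = ∑ u ∈ Tᶜ.powerset, η u ^ 2 := by
  have hsq : ∀ s, wedge (eS T) η s * wedge (eS T) η s = if T ⊆ s then η (s \ T) ^ 2 else 0 := by
    intro s
    rw [wedge_eS_apply]
    split_ifs
    · linear_combination η (s \ T) ^ 2 * esign_mul_self T (s \ T)
    · ring
  unfold formInner
  simp only [hsq, ← sum_filter]
  refine sum_nbij' (· \ T) (· ∪ T) ?_ ?_ ?_ ?_ fun _ _ => rfl <;> intro u hu <;>
    simp only [mem_filter, mem_univ, true_and, mem_powerset] at hu ⊢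
  · exact fun i hi => mem_compl.2 (mem_sdiff.1 hi).2
  · exact subset_union_right
  · exact sdiff_union_of_subset hu
  · exact union_sdiff_cancel_right (disjoint_left.2 fun i hi => mem_compl.1 (hu hi))

lemma formInner_wedge_eS_eq_zero {η : Form} (hη : IsForm 1 η) {T T' : Finset (Fin 8)}
    (hTT' : T.card + 1 < (T ∪ T').card) :
    formInner (wedge (eS T) η) (wedge (eS T') η) = 0 := by
  refine sum_eq_zero fun s _ => ?_
  rw [wedge_eS_apply, wedge_eS_apply]
  split_ifs with hT hT'
  -- a common term would sit at `s = T ∪ {i}`, which is too small to contain `T ∪ T'`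
  · have : (s \ T).card ≠ 1 := by
      have := card_sdiff_add_card_eq_card hT
      have := card_le_card (union_subset hT hT')
      omega
    rw [hη _ this, mul_zero, zero_mul]
  all_goals simp

lemma formInner_self_of_isForm_one {η : Form} (hη : IsForm 1 η) :
    formInner η η = ∑ i, η {i} ^ 2 := by
  calc formInner η η = ∑ u ∈ univ.powerset, η u ^ 2 := by simp only [formInner, powerset_univ, sq]
    _ = ∑ i, η {i} ^ 2 := sum_powerset_eq_sum_singleton univ fun u hu => by simp [hη u hu]

lemma formInner_wedge_sum_eS_self {ι : Type*} [Fintype ι] (S : ι → Finset (Fin 8)) (c : ι → ℝ)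
    (hS : Pairwise fun k l => (S k).card + 1 < (S k ∪ S l).card) {η : Form} (hη : IsForm 1 η) :
    formInner (wedge (∑ k, c k • eS (S k)) η) (wedge (∑ k, c k • eS (S k)) η) =
      ∑ k, c k ^ 2 * ∑ i ∈ (S k)ᶜ, η {i} ^ 2 := by
  rw [wedge_sum_smul_left, formInner_sum_smul_self_of_pairwise _ _
    fun k l hkl => formInner_wedge_eS_eq_zero hη (hS hkl)]
  refine sum_congr rfl fun k _ => ?_
  rw [formInner_wedge_eS_self, sum_powerset_eq_sum_singleton _ fun u hu => by simp [hη u hu]]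

def phiSupport : Fin 14 → Finset (Fin 8) :=
  ![{0,1,2,3}, {0,1,4,5}, {0,1,6,7}, {0,2,4,6}, {0,2,5,7}, {0,3,4,7}, {0,3,5,6},
    {4,5,6,7}, {2,3,6,7}, {2,3,4,5}, {1,3,5,7}, {1,3,4,6}, {1,2,5,6}, {1,2,4,7}]

def phiSign : Fin 14 → ℝ := ![1, -1, -1, -1, 1, -1, -1, 1, -1, -1, -1, 1, -1, -1]

lemma Phi_eq_sum : Phi = ∑ k, phiSign k • eS (phiSupport k) := by
  funext s
  simp only [Phi, phiSign, phiSupport, Pi.add_apply, Pi.sub_apply, Finset.sum_apply, Pi.smul_apply,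
    smul_eq_mul, Fin.sum_univ_succ, Fin.sum_univ_zero, Matrix.cons_val_zero, Matrix.cons_val_succ]
  ring

lemma card_phiSupport (k : Fin 14) : (phiSupport k).card = 4 := by
  revert k; decide

lemma card_phiSupport_union :
    Pairwise fun k l => (phiSupport k).card + 1 < (phiSupport k ∪ phiSupport l).card := by
  unfold Pairwise; decide

lemma card_filter_notMem_phiSupport (i : Fin 8) : #{k | i ∉ phiSupport k} = 7 := by
  revert i; decide

lemma phiSign_sq (k : Fin 14) : phiSign k ^ 2 = 1 := by
  fin_cases k <;> norm_num [phiSign]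

lemma isForm_Phi : IsForm 4 Phi :=
  Phi_eq_sum ▸ isForm_sum_smul_eS _ _ card_phiSupport

lemma formInner_wedge_Phi_self {η : Form} (hη : IsForm 1 η) :
    formInner (wedge Phi η) (wedge Phi η) = 7 * formInner η η := by
  rw [Phi_eq_sum, formInner_wedge_sum_eS_self _ _ card_phiSupport_union hη,
    formInner_self_of_isForm_one hη, mul_sum]
  simp only [phiSign_sq, one_mul]
  calc ∑ k, ∑ i ∈ (phiSupport k)ᶜ, η {i} ^ 2
      = ∑ i, ∑ k with i ∉ phiSupport k, η {i} ^ 2 := sum_comm' (by simp)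
    _ = ∑ i, 7 * η {i} ^ 2 := by
      simp only [sum_const, card_filter_notMem_phiSupport, nsmul_eq_mul, Nat.cast_ofNat]

/-- For any 1-form η and γ = ⋆(Φ ∧ η), one has |γ|² = 7|η|²;
equivalently (Φ ∧ η) ∧ ⋆(Φ ∧ η) = 7 η ∧ ⋆η. -/
theorem norm_star_phi_wedge_one_form (η : Form) (hη : IsForm 1 η) :
    formInner (hodge (wedge Phi η)) (hodge (wedge Phi η)) = 7 * formInner η η ∧
    wedge (wedge Phi η) (hodge (wedge Phi η)) = (7 : ℝ) • wedge η (hodge η) := by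
  have hΦη : IsForm 5 (wedge Phi η) := isForm_Phi.wedge hη
  refine ⟨by rw [formInner_hodge_hodge, formInner_wedge_Phi_self hη], ?_⟩
  rw [wedge_hodge hΦη hΦη, wedge_hodge hη hη, formInner_wedge_Phi_self hη, smul_smul]
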